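/- arXiv:2101.10881 — 5 statements merged into one kernel-verified Lean document; each statement's English description precedes it below -/
import Mathlib

section
/- Given sufficiently many blocks of threads, monomial evaluation and differentiation takes n steps for n variables: for n ≥ 3, the schedule assigning step j to forward job F_j (1 ≤ j ≤ n), step j to backward job B_j (1 ≤ j ≤ n−2), step n−1 to the coefficient-update job B̂ (which depends on B_{n−2}), and step max(j, n−3−j) + 1 to cross job C_j (1 ≤ j ≤ n−2, with C_{n−2} at step n−1) is a valid schedule, every assigned step is at most n, and the maximum assigned step equals n (attained by F_n). -/
/-- Given sufficiently many blocks of threads, monomial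
evaluation and differentiation takes `n` steps for `n` variables: for
`n ≥ 3`, the schedule assigning step `j` to forward job `F j` (`1 ≤ j ≤ n`),
step `j` to backward job `B j` (`1 ≤ j ≤ n-2`), step `n-1` to the
coefficient-update job `B̂` (which depends on `B (n-2)`), and step
`max j (n-3-j) + 1` to cross job `C j` (`1 ≤ j ≤ n-2`, with `C (n-2)` at
step `n-1`) is a valid schedule, every assigned step is at most `n`, and
the maximum assigned step equals `n`, attained by `F n`. -/
theorem monomial_eval_diff_takes_n_steps (n : ℕ) (hn : 3 ≤ n)
    (F B C : ℕ → ℕ) (Bhat : ℕ)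
    (hF : ∀ j, F j = j)
    (hB : ∀ j, B j = j)
    (hBhat : Bhat = n - 1)
    (hC : ∀ j, C j = max j (n - 3 - j) + 1) :
    -- validity of all dependency constraints
    (∀ j, 2 ≤ j → j ≤ n → F (j - 1) < F j) ∧
    (∀ j, 2 ≤ j → j ≤ n - 2 → B (j - 1) < B j) ∧
    (B (n - 2) < Bhat) ∧
    (∀ j, 1 ≤ j → j ≤ n - 3 → F j < C j ∧ B (n - 3 - j) < C j) ∧
    (C (n - 2) = n - 1 ∧ F (n - 2) < C (n - 2)) ∧
    -- every assigned step is at most n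
    (∀ j, 1 ≤ j → j ≤ n → F j ≤ n) ∧
    (∀ j, 1 ≤ j → j ≤ n - 2 → B j ≤ n) ∧
    (Bhat ≤ n) ∧
    (∀ j, 1 ≤ j → j ≤ n - 2 → C j ≤ n) ∧
    -- the maximum assigned step equals n, attained by F n
    (F n = n) := by
  simp only [hF, hB, hBhat, hC]
  refine ⟨fun j h1 h2 => by omega, fun j h1 h2 => by omega, by omega,
    fun j h1 h2 => ⟨by omega, by omega⟩, ⟨by omega, by omega⟩,
    fun j h1 h2 => by omega, fun j h1 h2 => by omega, by omega,
    fun j h1 h2 => by omega, trivial⟩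
end

section
/- Consider a polynomial p in n variables with N ≥ 1 monomials, the k-th monomial having n_k variables, and let m = max_k n_k. Given sufficiently many blocks of threads, the evaluation and differentiation of p takes m + ⌈log₂ N⌉ steps: there is a valid schedule in which, for each monomial k, its convolution jobs (forward jobs F_{k,j} at step j for 1 ≤ j ≤ n_k, backward jobs B_{k,j} at step j for 1 ≤ j ≤ n_k−2, update B̂_k at step n_k−1, cross jobs C_{k,j} at step max(j, n_k−3−j)+1) all receive steps at most m, and the addition jobs, arranged in ⌈log₂ N⌉ levels of a pairwise summation tree in which each level-ℓ job depends only on convolution jobs and on addition jobs of levels below ℓ, receive step m + ℓ at level ℓ; every job's step strictly exceeds the steps of its dependencies and the maximum step equals m + ⌈log₂ N⌉ (with ⌈log₂ N⌉ = Nat.clog 2 N). -/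
/-- Consider a polynomial `p` in `n` variables with
`N ≥ 1` monomials, the `k`-th monomial having `nk k` variables, and let
`m = max_k nk k`.  Given sufficiently many blocks of threads, evaluation
and differentiation of `p` takes `m + ⌈log₂ N⌉` steps: the schedule where
the convolution jobs of monomial `k` are placed at the steps
`F k j = j`, `B k j = j`, `B̂ k = nk k - 1`,
`C k j = max j (nk k - 3 - j) + 1` — all of which are at most `m` — and
the addition jobs of level `ℓ` of the `⌈log₂ N⌉`-level pairwise summation
tree are placed at step `A ℓ = m + ℓ`, is valid (every job's step strictly
exceeds the steps of its dependencies: the in-monomial convolution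
dependencies, and, for a level-`ℓ` addition job, any convolution job and
any addition job of a level strictly below `ℓ`), and the maximum assigned
step equals `m + ⌈log₂ N⌉`, with `⌈log₂ N⌉ = Nat.clog 2 N`. -/
theorem polynomial_eval_diff_takes_m_plus_log_steps
    (N : ℕ) (hN : 1 ≤ N) (nk : Fin N → ℕ) (hnk : ∀ k, 3 ≤ nk k)
    (m : ℕ) (hm : m = Finset.univ.sup nk)
    (F B C : Fin N → ℕ → ℕ) (Bhat : Fin N → ℕ) (A : ℕ → ℕ)
    (hF : ∀ k j, F k j = j)
    (hB : ∀ k j, B k j = j)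
    (hBhat : ∀ k, Bhat k = nk k - 1)
    (hC : ∀ k j, C k j = max j (nk k - 3 - j) + 1)
    (hA : ∀ ℓ, A ℓ = m + ℓ) :
    -- validity of the convolution dependency constraints in each monomial
    (∀ k, (∀ j, 2 ≤ j → j ≤ nk k → F k (j - 1) < F k j) ∧
          (∀ j, 2 ≤ j → j ≤ nk k - 2 → B k (j - 1) < B k j) ∧
          (B k (nk k - 2) < Bhat k) ∧
          (∀ j, 1 ≤ j → j ≤ nk k - 3 →
            F k j < C k j ∧ B k (nk k - 3 - j) < C k j) ∧
          (F k (nk k - 2) < C k (nk k - 2))) ∧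
    -- all convolution jobs receive steps at most m
    (∀ k, (∀ j, 1 ≤ j → j ≤ nk k → F k j ≤ m) ∧
          (∀ j, 1 ≤ j → j ≤ nk k - 2 → B k j ≤ m) ∧
          (Bhat k ≤ m) ∧
          (∀ j, 1 ≤ j → j ≤ nk k - 2 → C k j ≤ m)) ∧
    -- a level-ℓ addition job's step strictly exceeds every convolution
    -- step (all of which are ≤ m) and every addition step of a lower level
    (∀ ℓ, 1 ≤ ℓ → ℓ ≤ Nat.clog 2 N →
      (∀ s, s ≤ m → s < A ℓ) ∧ (∀ ℓ', ℓ' < ℓ → A ℓ' < A ℓ)) ∧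
    -- every assigned step is at most m + ⌈log₂ N⌉ ...
    (∀ k, (∀ j, 1 ≤ j → j ≤ nk k → F k j ≤ m + Nat.clog 2 N) ∧
          (∀ j, 1 ≤ j → j ≤ nk k - 2 → B k j ≤ m + Nat.clog 2 N) ∧
          (Bhat k ≤ m + Nat.clog 2 N) ∧
          (∀ j, 1 ≤ j → j ≤ nk k - 2 → C k j ≤ m + Nat.clog 2 N)) ∧
    (∀ ℓ, 1 ≤ ℓ → ℓ ≤ Nat.clog 2 N → A ℓ ≤ m + Nat.clog 2 N) ∧
    -- ... and the maximum assigned step equals m + ⌈log₂ N⌉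
    ((1 ≤ Nat.clog 2 N → A (Nat.clog 2 N) = m + Nat.clog 2 N) ∧
     (Nat.clog 2 N = 0 → ∃ k, F k (nk k) = m + Nat.clog 2 N)) := by
  have hkm : ∀ k, nk k ≤ m := fun k => hm ▸ Finset.le_sup (Finset.mem_univ k)
  have hCm : ∀ k j, 1 ≤ j → j ≤ nk k - 2 → C k j ≤ m := by
    intro k j h1 h2
    rw [hC]
    have h3 := hnk k
    have h4 := hkm k
    have : max j (nk k - 3 - j) ≤ nk k - 2 := max_le h2 (by omega)
    omega
  refine ⟨?_, ?_, ?_, ?_, ?_, ?_, ?_⟩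
  · intro k
    refine ⟨?_, ?_, ?_, ?_, ?_⟩
    · intro j h1 h2; rw [hF, hF]; omega
    · intro j h1 h2; rw [hB, hB]; omega
    · rw [hB, hBhat]; have := hnk k; omega
    · intro j h1 h2
      constructor
      · rw [hF, hC]; omega
      · rw [hB, hC]; omega
    · rw [hF, hC]; have := hnk k; omega
  · intro k
    refine ⟨?_, ?_, ?_, ?_⟩
    · intro j h1 h2; rw [hF]; exact le_trans h2 (hkm k)
    · intro j h1 h2; rw [hB]; have := hkm k; omega
    · rw [hBhat]; have := hkm k; omega
    · exact hCm k
  · intro ℓ h1 h2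
    constructor
    · intro s hs; rw [hA]; omega
    · intro ℓ' h; rw [hA, hA]; omega
  · intro k
    refine ⟨?_, ?_, ?_, ?_⟩
    · intro j h1 h2; rw [hF]; have := hkm k; omega
    · intro j h1 h2; rw [hB]; have := hkm k; omega
    · rw [hBhat]; have := hkm k; omega
    · intro j h1 h2; have := hCm k j h1 h2; omega
  · intro ℓ h1 h2; rw [hA]; omega
  · intro h; rw [hA]
  · intro h
    have hN1 : N = 1 := by
      by_contra hne
      have h2 : 2 ≤ N := by omega
      have := Nat.clog_pos one_lt_two h2
      omega
    subst hN1
    refine ⟨0, ?_⟩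
    rw [hF, h, hm]
    have : (Finset.univ : Finset (Fin 1)) = {0} := by decide
    rw [this, Finset.sup_singleton]
    simp
end

section
/- Pairwise tree summation of N values requires only ⌈log₂ N⌉ parallel addition steps: let M be a commutative additive monoid, N ≥ 1, v : ℕ → M, and define g : ℕ → ℕ → M by g 0 i = v i if i < N and g 0 i = 0 otherwise, and g (t+1) i = g t (2i) + g t (2i+1). Then g (Nat.clog 2 N) 0 = Σ_{i=0}^{N−1} v i. -/
/-- Pairwise tree summation of `N` values requires only
`⌈log₂ N⌉` parallel addition steps: for a commutative additive monoid `M`,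
`N ≥ 1`, `v : ℕ → M`, and `g` defined by `g 0 i = v i` for `i < N`
(and `0` otherwise) and `g (t+1) i = g t (2i) + g t (2i+1)`, one has
`g (Nat.clog 2 N) 0 = ∑_{i=0}^{N-1} v i`. -/
theorem pairwise_tree_summation {M : Type*} [AddCommMonoid M]
    (N : ℕ) (hN : 1 ≤ N) (v : ℕ → M) (g : ℕ → ℕ → M)
    (hg0 : ∀ i, g 0 i = if i < N then v i else 0)
    (hgs : ∀ t i, g (t + 1) i = g t (2 * i) + g t (2 * i + 1)) :
    g (Nat.clog 2 N) 0 = ∑ i ∈ Finset.range N, v i := by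
  have key : ∀ t i, g t i = ∑ j ∈ Finset.range (2 ^ t), g 0 (2 ^ t * i + j) := by
    intro t
    induction t with
    | zero => intro i; simp
    | succ t ih =>
      intro i
      rw [hgs, ih, ih, pow_succ, mul_two (2 ^ t), Finset.sum_range_add]
      congr 1 <;> (apply Finset.sum_congr rfl; intro j _; congr 1; ring)
  have hle : N ≤ 2 ^ Nat.clog 2 N := Nat.le_pow_clog one_lt_two N
  rw [key]
  simp only [mul_zero, zero_add]
  rw [show (∑ i ∈ Finset.range N, v i) = ∑ i ∈ Finset.range N, g 0 i from
    Finset.sum_congr rfl fun x hx => by rw [hg0, if_pos (Finset.mem_range.mp hx)]]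
  symm
  apply Finset.sum_subset (Finset.range_subset_range.mpr hle)
  intro x _ hx
  rw [hg0, if_neg (by simpa using hx)]
end

section
/- The reverse mode of algorithmic differentiation correctly computes the value and all partial derivatives of the monomial p = a·x_1·x_2⋯x_n: with p = C a * ∏_{i : Fin n} X i ∈ MvPolynomial (Fin n) R and z : Fin n → R, one has f_n = eval z p = a·∏_{i=1}^{n} z_i; b̂ = eval z (pderiv 1 p) = a·∏_{i=2}^{n} z_i; c_j = eval z (pderiv (j+1) p) = a·∏_{1 ≤ i ≤ n, i ≠ j+1} z_i for 1 ≤ j ≤ n−2; and f_{n−1} = eval z (pderiv n p) = a·∏_{i=1}^{n−1} z_i. -/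
open MvPolynomial

lemma pderiv_prod_X {R : Type*} [CommRing R] {n : ℕ} (k : Fin n) :
    pderiv k (∏ i : Fin n, (X i : MvPolynomial (Fin n) R)) =
      ∏ i ∈ Finset.univ.erase k, X i := by
  rw [← Finset.mul_prod_erase Finset.univ X (Finset.mem_univ k), pderiv_mul, pderiv_X_self,
    one_mul]
  have h0 : pderiv k (∏ i ∈ Finset.univ.erase k, (X i : MvPolynomial (Fin n) R)) = 0 := by
    refine Finset.prod_induction _ (fun p => pderiv k p = 0) ?_ ?_ ?_
    · intro x y hx hy; rw [pderiv_mul, hx, hy]; ring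
    · exact pderiv_one
    · intro i hi
      exact pderiv_X_of_ne (Finset.ne_of_mem_erase hi)
  rw [h0]; ring

lemma eval_pderiv_prod_X {R : Type*} [CommRing R] {n : ℕ} (k : Fin n) (a : R) (z : Fin n → R) :
    eval z (pderiv k (C a * ∏ i : Fin n, X i)) = a * ∏ i ∈ Finset.univ.erase k, z i := by
  rw [pderiv_C_mul, pderiv_prod_X]
  simp


/-- The reverse mode of algorithmic differentiation
correctly computes the value and all partial derivatives of
`p = C a * ∏ i, X i` (the monomial `a·x₁·x₂⋯xₙ`, where `x_j` is the
variable `X ⟨j-1,_⟩` of `MvPolynomial (Fin n) R`): the last forward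
product `f n` equals `eval z p = a·∏ z_i`; the updated backward product
`b̂` equals `eval z (pderiv x₁ p)`, the derivative with respect to the
first variable; the cross product `c j` equals
`eval z (pderiv x_{j+1} p) = a·∏_{i ≠ j+1} z_i` for `1 ≤ j ≤ n-2`; and
the next-to-last forward product `f (n-1)` equals
`eval z (pderiv xₙ p)`, the derivative with respect to the last
variable. -/
theorem reverse_mode_monomial_correct {R : Type*} [CommRing R]
    (n : ℕ) (hn : 3 ≤ n) (a : R) (z : Fin n → R)
    (f b c : ℕ → R) (bhat : R)
    -- forward products
    (hf1 : f 1 = a * z ⟨0, by omega⟩)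
    (hf : ∀ j, 2 ≤ j → (h : j ≤ n) → f j = f (j - 1) * z ⟨j - 1, by omega⟩)
    -- backward products
    (hb1 : b 1 = z ⟨n - 1, by omega⟩ * z ⟨n - 2, by omega⟩)
    (hb : ∀ j, 2 ≤ j → (h : j ≤ n - 2) → b j = b (j - 1) * z ⟨n - j - 1, by omega⟩)
    -- coefficient update
    (hbhat : bhat = b (n - 2) * a)
    -- cross products
    (hc : ∀ j, 1 ≤ j → j ≤ n - 3 → c j = f j * b (n - 2 - j))
    (hc2 : c (n - 2) = f (n - 2) * z ⟨n - 1, by omega⟩) :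
    -- the value of the monomial
    (f n = eval z (C a * ∏ i : Fin n, X i) ∧
      f n = a * ∏ i : Fin n, z i) ∧
    -- derivative with respect to the first variable x₁
    (bhat = eval z (pderiv (⟨0, by omega⟩ : Fin n) (C a * ∏ i : Fin n, X i)) ∧
      bhat = a * ∏ i ∈ Finset.univ.erase (⟨0, by omega⟩ : Fin n), z i) ∧
    -- derivatives with respect to x_{j+1} for 1 ≤ j ≤ n-2
    (∀ j, 1 ≤ j → (h : j ≤ n - 2) →
      c j = eval z (pderiv (⟨j, by omega⟩ : Fin n) (C a * ∏ i : Fin n, X i)) ∧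
      c j = a * ∏ i ∈ Finset.univ.erase (⟨j, by omega⟩ : Fin n), z i) ∧
    -- derivative with respect to the last variable xₙ
    (f (n - 1) = eval z (pderiv (⟨n - 1, by omega⟩ : Fin n) (C a * ∏ i : Fin n, X i)) ∧
      f (n - 1) = a * ∏ i ∈ Finset.univ.erase (⟨n - 1, by omega⟩ : Fin n), z i) := by
  -- closed form for forward products
  have hF : ∀ j, 1 ≤ j → j ≤ n →
      f j = a * ∏ i ∈ Finset.univ.filter (fun i : Fin n => i.val < j), z i := by
    intro j hj1 hjn
    induction j, hj1 using Nat.le_induction with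
    | base =>
        have hset : Finset.univ.filter (fun i : Fin n => i.val < 1) = {⟨0, by omega⟩} := by
          ext i; simp [Fin.ext_iff, Nat.lt_one_iff]
        rw [hset, Finset.prod_singleton, hf1]
    | succ j hj ih =>
        have hfs := hf (j + 1) (by omega) hjn
        simp only [Nat.add_sub_cancel] at hfs
        have hjlt : j < n := by omega
        have hset : Finset.univ.filter (fun i : Fin n => i.val < j + 1) =
            insert (⟨j, hjlt⟩ : Fin n) (Finset.univ.filter (fun i : Fin n => i.val < j)) := by
          ext i; simp [Fin.ext_iff]; omega
        have hnot : (⟨j, hjlt⟩ : Fin n) ∉ Finset.univ.filter (fun i : Fin n => i.val < j) := by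
          simp
        rw [hset, Finset.prod_insert hnot, hfs, ih (by omega)]
        ring
  -- closed form for backward products
  have hB : ∀ j, 1 ≤ j → j ≤ n - 2 →
      b j = ∏ i ∈ Finset.univ.filter (fun i : Fin n => n - j - 1 ≤ i.val), z i := by
    intro j hj1 hjn
    induction j, hj1 using Nat.le_induction with
    | base =>
        have hset : Finset.univ.filter (fun i : Fin n => n - 1 - 1 ≤ i.val) =
            {(⟨n - 1, by omega⟩ : Fin n), ⟨n - 2, by omega⟩} := by
          ext i; simp [Fin.ext_iff]; omega
        rw [hset, hb1]
        rw [Finset.prod_insert (by simp [Fin.ext_iff]; omega), Finset.prod_singleton]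
    | succ j hj ih =>
        have hbs := hb (j + 1) (by omega) hjn
        simp only [Nat.add_sub_cancel] at hbs
        have hlt : n - (j + 1) - 1 < n := by omega
        have hset : Finset.univ.filter (fun i : Fin n => n - (j + 1) - 1 ≤ i.val) =
            insert (⟨n - (j + 1) - 1, hlt⟩ : Fin n)
              (Finset.univ.filter (fun i : Fin n => n - j - 1 ≤ i.val)) := by
          ext i; simp [Fin.ext_iff]; omega
        have hnot : (⟨n - (j + 1) - 1, hlt⟩ : Fin n) ∉
            Finset.univ.filter (fun i : Fin n => n - j - 1 ≤ i.val) := by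
          simp; omega
        rw [hset, Finset.prod_insert hnot, hbs, ih (by omega)]
        ring
  refine ⟨⟨?_, ?_⟩, ⟨?_, ?_⟩, ?_, ⟨?_, ?_⟩⟩
  case _ => -- f n = eval
    rw [hF n (by omega) le_rfl]
    have : Finset.univ.filter (fun i : Fin n => i.val < n) = Finset.univ := by
      ext i; simp [i.isLt]
    rw [this]; simp
  case _ =>
    rw [hF n (by omega) le_rfl]
    have : Finset.univ.filter (fun i : Fin n => i.val < n) = Finset.univ := by
      ext i; simp [i.isLt]
    rw [this]
  case _ => -- bhat eval
    rw [eval_pderiv_prod_X, hbhat, hB (n - 2) (by omega) le_rfl]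
    have : Finset.univ.filter (fun i : Fin n => n - (n - 2) - 1 ≤ i.val) =
        Finset.univ.erase (⟨0, by omega⟩ : Fin n) := by
      ext i; simp [Fin.ext_iff]; omega
    rw [this]; ring
  case _ =>
    rw [hbhat, hB (n - 2) (by omega) le_rfl]
    have : Finset.univ.filter (fun i : Fin n => n - (n - 2) - 1 ≤ i.val) =
        Finset.univ.erase (⟨0, by omega⟩ : Fin n) := by
      ext i; simp [Fin.ext_iff]; omega
    rw [this]; ring
  case _ => -- cross products
    intro j hj1 hj2
    have key : c j = a * ∏ i ∈ Finset.univ.erase (⟨j, by omega⟩ : Fin n), z i := by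
      by_cases hcase : j ≤ n - 3
      · rw [hc j hj1 hcase, hF j hj1 (by omega), hB (n - 2 - j) (by omega) (by omega)]
        have hsplit : Finset.univ.erase (⟨j, by omega⟩ : Fin n) =
            (Finset.univ.filter (fun i : Fin n => i.val < j)) ∪
            (Finset.univ.filter (fun i : Fin n => n - (n - 2 - j) - 1 ≤ i.val)) := by
          ext i; simp [Fin.ext_iff]; omega
        have hdisj : Disjoint (Finset.univ.filter (fun i : Fin n => i.val < j))
            (Finset.univ.filter (fun i : Fin n => n - (n - 2 - j) - 1 ≤ i.val)) := by
          rw [Finset.disjoint_left]; intro i hi hi'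
          simp at hi hi'; omega
        rw [hsplit, Finset.prod_union hdisj]; ring
      · have hj : j = n - 2 := by omega
        subst hj
        rw [hc2, hF (n - 2) (by omega) (by omega)]
        have hlt : n - 1 < n := by omega
        have hset : Finset.univ.erase (⟨n - 2, by omega⟩ : Fin n) =
            insert (⟨n - 1, hlt⟩ : Fin n)
              (Finset.univ.filter (fun i : Fin n => i.val < n - 2)) := by
          ext i; simp [Fin.ext_iff]; omega
        have hnot : (⟨n - 1, hlt⟩ : Fin n) ∉
            Finset.univ.filter (fun i : Fin n => i.val < n - 2) := by
          simp; omega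
        rw [hset, Finset.prod_insert hnot]; ring
    exact ⟨by rw [eval_pderiv_prod_X]; exact key, key⟩
  case _ => -- f (n-1) eval
    rw [eval_pderiv_prod_X, hF (n - 1) (by omega) (by omega)]
    have : Finset.univ.filter (fun i : Fin n => i.val < n - 1) =
        Finset.univ.erase (⟨n - 1, by omega⟩ : Fin n) := by
      ext i; simp [Fin.ext_iff]; omega
    rw [this]
  case _ =>
    rw [hF (n - 1) (by omega) (by omega)]
    have : Finset.univ.filter (fun i : Fin n => i.val < n - 1) =
        Finset.univ.erase (⟨n - 1, by omega⟩ : Fin n) := by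
      ext i; simp [Fin.ext_iff]; omega
    rw [this]
end

section
/- The cross products satisfy c_j = a·∏_{1 ≤ i ≤ n, i ≠ j+1} z_i for every 1 ≤ j ≤ n−2; that is, c_j (computed for j ≤ n−3 as f_j·b_{n−2−j}, and c_{n−2} as f_{n−2}·z_n) equals the product of the coefficient a with all inputs except z_{j+1}. -/
private lemma fwd_prod {R : Type*} [CommRing R] (n : ℕ) (a : R) (z f : ℕ → R)
    (hf1 : f 1 = a * z 1)
    (hf : ∀ j, 2 ≤ j → j ≤ n → f j = f (j - 1) * z j) :
    ∀ j, 1 ≤ j → j ≤ n → f j = a * ∏ i ∈ Finset.Icc 1 j, z i := by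
  intro j
  induction j with
  | zero => omega
  | succ k ih =>
    intro h1 h2
    rcases Nat.eq_or_lt_of_le h1 with h | h
    · simp [← h, hf1]
    · have hk1 : 1 ≤ k := by omega
      have hstep := hf (k + 1) (by omega) h2
      simp only [Nat.add_sub_cancel] at hstep
      rw [hstep, ih hk1 (by omega),
        Finset.prod_Icc_succ_top (by omega : 1 ≤ k + 1)]
      ring

private lemma bwd_prod {R : Type*} [CommRing R] (n : ℕ) (hn : 3 ≤ n) (z b : ℕ → R)
    (hb1 : b 1 = z n * z (n - 1))
    (hb : ∀ j, 2 ≤ j → j ≤ n - 2 → b j = b (j - 1) * z (n - j)) :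
    ∀ j, 1 ≤ j → j ≤ n - 2 → b j = ∏ i ∈ Finset.Icc (n - j) n, z i := by
  intro j
  induction j with
  | zero => omega
  | succ k ih =>
    intro h1 h2
    rcases Nat.eq_or_lt_of_le h1 with h | h
    · rw [← h, hb1]
      have : Finset.Icc (n - 1) n = {n - 1, n} := by
        ext i; simp [Finset.mem_Icc]; omega
      rw [this, Finset.prod_insert (by simp; omega), Finset.prod_singleton]
      ring
    · have hk1 : 1 ≤ k := by omega
      have hstep := hb (k + 1) (by omega) h2
      simp only [Nat.add_sub_cancel] at hstep
      rw [hstep, ih hk1 (by omega)]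
      have hins : Finset.Icc (n - (k + 1)) n =
          insert (n - (k + 1)) (Finset.Icc (n - k) n) := by
        ext i; simp [Finset.mem_Icc, Finset.mem_insert]; omega
      rw [hins, Finset.prod_insert (by simp [Finset.mem_Icc]; omega)]
      ring

/-- The cross products of the reverse mode of algorithmic
differentiation for the monomial `a·x₁·x₂⋯xₙ` (with `n ≥ 3`) satisfy
`c j = a * ∏_{1 ≤ i ≤ n, i ≠ j+1} z i` for every `1 ≤ j ≤ n-2`; that is,
`c j` (computed for `j ≤ n-3` as `f j * b (n-2-j)`, and `c (n-2)` as
`f (n-2) * z n`) equals the product of the coefficient `a` with all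
inputs except `z (j+1)`. -/
theorem cross_products_correct {R : Type*} [CommRing R]
    (n : ℕ) (hn : 3 ≤ n) (a : R) (z : ℕ → R) (f b c : ℕ → R)
    -- forward products
    (hf1 : f 1 = a * z 1)
    (hf : ∀ j, 2 ≤ j → j ≤ n → f j = f (j - 1) * z j)
    -- backward products
    (hb1 : b 1 = z n * z (n - 1))
    (hb : ∀ j, 2 ≤ j → j ≤ n - 2 → b j = b (j - 1) * z (n - j))
    -- cross products
    (hc : ∀ j, 1 ≤ j → j ≤ n - 3 → c j = f j * b (n - 2 - j))
    (hc2 : c (n - 2) = f (n - 2) * z n) :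
    ∀ j, 1 ≤ j → j ≤ n - 2 →
      c j = a * ∏ i ∈ (Finset.Icc 1 n).erase (j + 1), z i := by
  have hF := fwd_prod n a z f hf1 hf
  have hB := bwd_prod n hn z b hb1 hb
  intro j h1 h2
  have hsplit : (Finset.Icc 1 n).erase (j + 1) =
      Finset.Icc 1 j ∪ Finset.Icc (j + 2) n := by
    ext i
    simp only [Finset.mem_erase, Finset.mem_Icc, Finset.mem_union]
    omega
  have hdisj : Disjoint (Finset.Icc 1 j) (Finset.Icc (j + 2) n) := by
    rw [Finset.disjoint_left]
    intro i hi hi'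
    simp only [Finset.mem_Icc] at hi hi'
    omega
  rw [hsplit, Finset.prod_union hdisj]
  rcases Nat.lt_or_ge j (n - 2) with h | h
  · -- j ≤ n - 3
    rw [hc j h1 (by omega), hF j h1 (by omega), hB (n - 2 - j) (by omega) (by omega)]
    have : n - (n - 2 - j) = j + 2 := by omega
    rw [this]
    ring
  · have hj : j = n - 2 := by omega
    subst hj
    rw [hc2, hF (n - 2) (by omega) (by omega)]
    have : Finset.Icc (n - 2 + 2) n = {n} := by
      ext i; simp [Finset.mem_Icc]; omega
    rw [this, Finset.prod_singleton]
    ring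
end
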